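/- Let T_2 ⊆ ℝ² be the triangle with vertices (0,0), (0,1) and (1,0), and let c_2 = (1/2, 1/2). Then the expected distance from c_2 to a uniform random point in T_2 equals E[V_{T_2[2],c_2}] = (1/(6√2)) · (2 + √2 · arsinh 1), where arsinh 1 = log(1 + √2) is the inverse hyperbolic sine of 1. -/

import Mathlib

open MeasureTheory

noncomputable def expectedDist (K : Set (EuclideanSpace ℝ (Fin 2)))
    (x : EuclideanSpace ℝ (Fin 2)) : ℝ :=
  ((volume K).toReal)⁻¹ * ∫ y in K, ‖x - y‖

/-! Both the triangle and the distance to `c₂` are symmetric under swapping the coordinates, so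
the integral is twice the integral over the half `0 ≤ x ≤ 1/2, x ≤ y ≤ 1 - x`. On the vertical
slice at `x` the distance is `√(b² + t²)` with `b = 1/2 - x` and `t` ranging over `[-b, b]`; the
substitution `t = b s` turns the slice integral into `b² ∫_{-1}^{1} √(1 + s²) ds
= b² (√2 + arsinh 1)`. Finally `∫_0^{1/2} b² dx = 1/24` and the triangle has area `1/2`. -/

open Set Real

theorem hasDerivAt_antideriv_sqrt_one_add_sq (s : ℝ) :
    HasDerivAt (fun s => (s * √(1 + s ^ 2) + arsinh s) / 2) √(1 + s ^ 2) s := by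
  have hpos : 0 < 1 + s ^ 2 := by positivity
  have hsqrt : HasDerivAt (fun s => √(1 + s ^ 2)) (2 * s / (2 * √(1 + s ^ 2))) s := by
    simpa using ((hasDerivAt_pow 2 s).const_add 1).sqrt hpos.ne'
  have hne : √(1 + s ^ 2) ≠ 0 := (sqrt_pos.2 hpos).ne'
  refine ((((hasDerivAt_id' s).mul hsqrt).add (hasDerivAt_arsinh s)).div_const 2).congr_deriv ?_
  field_simp
  rw [sq_sqrt hpos.le]
  ring

theorem integral_sqrt_one_add_sq : ∫ s in (-1)..1, √(1 + s ^ 2) = √2 + arsinh 1 := by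
  rw [intervalIntegral.integral_eq_sub_of_hasDerivAt
    (fun s _ => hasDerivAt_antideriv_sqrt_one_add_sq s)
    (Continuous.intervalIntegrable (by fun_prop) _ _)]
  norm_num [arsinh_neg]
  ring

theorem integral_sqrt_sq_add_sq (b : ℝ) (hb : 0 ≤ b) :
    ∫ t in (-b)..b, √(b ^ 2 + t ^ 2) = b ^ 2 * (√2 + arsinh 1) := by
  have hscale (s : ℝ) : √(b ^ 2 + (b * s) ^ 2) = b * √(1 + s ^ 2) := by
    rw [show b ^ 2 + (b * s) ^ 2 = b ^ 2 * (1 + s ^ 2) by ring, sqrt_mul (sq_nonneg b),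
      sqrt_sq hb]
  have h := intervalIntegral.mul_integral_comp_mul_left (f := fun t => √(b ^ 2 + t ^ 2))
    (a := -1) (b := 1) (c := b)
  simp only [hscale, intervalIntegral.integral_const_mul, integral_sqrt_one_add_sq, mul_neg,
    mul_one] at h
  rw [← h]
  ring

section

variable {E : Type*} [NormedAddCommGroup E] [NormedSpace ℝ E]

theorem setIntegral_eq_integral_sections {α β : Type*} [MeasurableSpace α] [MeasurableSpace β]
    {μ : Measure α} {ν : Measure β} [SFinite μ]
    [SFinite ν] {R : Set (α × β)} (hR : MeasurableSet R) {f : α × β → E}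
    (hf : IntegrableOn f R (μ.prod ν)) :
    ∫ p in R, f p ∂μ.prod ν = ∫ x, ∫ y in Prod.mk x ⁻¹' R, f (x, y) ∂ν ∂μ := by
  rw [← integral_indicator hR, integral_prod _ ((integrable_indicator_iff hR).2 hf)]
  congr with x
  rw [← integral_indicator (measurable_prodMk_left hR)]
  rfl

theorem setIntegral_between_graphs {a b : ℝ} (hab : a ≤ b) {l u : ℝ → ℝ} (hl : Measurable l)
    (hu : Measurable u) (hlu : ∀ x ∈ Icc a b, l x ≤ u x) {f : ℝ × ℝ → E}
    (hf : IntegrableOn f {p | p.1 ∈ Icc a b ∧ p.2 ∈ Icc (l p.1) (u p.1)}) :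
    ∫ p in {p : ℝ × ℝ | p.1 ∈ Icc a b ∧ p.2 ∈ Icc (l p.1) (u p.1)}, f p
      = ∫ x in a..b, ∫ y in l x..u x, f (x, y) := by
  set R := {p : ℝ × ℝ | p.1 ∈ Icc a b ∧ p.2 ∈ Icc (l p.1) (u p.1)}
  have hR : MeasurableSet R :=
    (measurable_fst measurableSet_Icc).inter
      ((measurableSet_le (hl.comp measurable_fst) measurable_snd).inter
        (measurableSet_le measurable_snd (hu.comp measurable_fst)))
  rw [Measure.volume_eq_prod] at hf ⊢
  rw [setIntegral_eq_integral_sections hR hf, intervalIntegral.integral_of_le hab,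
    ← integral_Icc_eq_integral_Ioc, ← integral_indicator measurableSet_Icc]
  congr with x
  by_cases hx : x ∈ Icc a b
  · have hsection : Prod.mk x ⁻¹' R = Icc (l x) (u x) := by
      ext; simp only [R, mem_preimage, mem_ofPred_eq, hx, true_and]
    rw [hsection, indicator_of_mem hx, intervalIntegral.integral_of_le (hlu x hx),
      integral_Icc_eq_integral_Ioc]
  · have hsection : Prod.mk x ⁻¹' R = ∅ := by
      ext; simp only [R, mem_preimage, mem_ofPred_eq, hx, false_and, mem_empty_iff_false]
    simp [hsection, hx]

theorem volume_diagonal_eq_zero {μ : Measure ℝ} [SFinite μ] [NullSingletonClass μ] :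
    μ.prod μ {p : ℝ × ℝ | p.1 = p.2} = 0 := by
  rw [Measure.prod_apply (measurableSet_eq_fun measurable_fst measurable_snd)]
  simp [preimage]

theorem setIntegral_union_preimage_swap {α : Type*} [MeasurableSpace α] {μ : Measure α}
    [SFinite μ] {H : Set (α × α)} (hH : MeasurableSet H)
    (hdisj : AEDisjoint (μ.prod μ) H (Prod.swap ⁻¹' H)) {f : α × α → E}
    (hf : IntegrableOn f H (μ.prod μ)) (hsymm : ∀ p, f p.swap = f p) :
    ∫ p in H ∪ Prod.swap ⁻¹' H, f p ∂μ.prod μ = (2 : ℝ) • ∫ p in H, f p ∂μ.prod μ := by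
  have hswap : MeasurePreserving Prod.swap (μ.prod μ) (μ.prod μ) := Measure.measurePreserving_swap
  have hH' : ∫ p in Prod.swap ⁻¹' H, f p ∂μ.prod μ = ∫ p in H, f p ∂μ.prod μ := by
    calc ∫ p in Prod.swap ⁻¹' H, f p ∂μ.prod μ
        = ∫ p in Prod.swap ⁻¹' H, f p.swap ∂μ.prod μ :=
          setIntegral_congr_fun (hH.preimage measurable_swap) fun p _ => (hsymm p).symm
      _ = ∫ p in H, f p ∂μ.prod μ :=
          hswap.setIntegral_preimage_emb MeasurableEquiv.prodComm.measurableEmbedding f H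
  rw [setIntegral_union₀ hdisj (hH.preimage measurable_swap).nullMeasurableSet hf
    (hswap.integrableOn_comp_preimage MeasurableEquiv.prodComm.measurableEmbedding
      |>.2 hf |>.congr_fun (fun p _ => hsymm p) (hH.preimage measurable_swap)), hH', two_smul]

def rightTriangle : Set (ℝ × ℝ) := {p | 0 ≤ p.1 ∧ 0 ≤ p.2 ∧ p.1 + p.2 ≤ 1}

def rightTriangleUpperHalf : Set (ℝ × ℝ) := {p | p.1 ∈ Icc 0 (1 / 2) ∧ p.2 ∈ Icc p.1 (1 - p.1)}

theorem rightTriangle_eq_union :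
    rightTriangle = rightTriangleUpperHalf ∪ Prod.swap ⁻¹' rightTriangleUpperHalf := by
  ext ⟨x, y⟩
  simp only [rightTriangle, rightTriangleUpperHalf, mem_union, mem_preimage, Prod.fst_swap,
    Prod.snd_swap, mem_ofPred_eq, mem_Icc]
  constructor
  · rintro ⟨hx, hy, hxy⟩
    rcases le_total x y with h | h
    · exact .inl ⟨⟨hx, by linarith⟩, h, by linarith⟩
    · exact .inr ⟨⟨hy, by linarith⟩, h, by linarith⟩
  · rintro (⟨⟨h₁, h₂⟩, h₃, h₄⟩ | ⟨⟨h₁, h₂⟩, h₃, h₄⟩) <;>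
      exact ⟨by linarith, by linarith, by linarith⟩

theorem integral_rightTriangle {f : ℝ × ℝ → E} (hf : Continuous f) (hsymm : ∀ p, f p.swap = f p) :
    ∫ p in rightTriangle, f p = (2 : ℝ) • ∫ x in 0..1 / 2, ∫ y in x..1 - x, f (x, y) := by
  set H := rightTriangleUpperHalf
  have hH : MeasurableSet H :=
    (measurable_fst measurableSet_Icc).inter
      ((measurableSet_le measurable_fst measurable_snd).inter
        (measurableSet_le measurable_snd (measurable_const.sub measurable_fst)))
  have hHsub : H ⊆ Icc (0, 0) (1, 1) := fun p ⟨⟨h₁, h₂⟩, h₃, h₄⟩ =>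
    ⟨⟨h₁, by linarith⟩, ⟨by linarith, by linarith⟩⟩
  have hint : IntegrableOn f H :=
    (hf.continuousOn.integrableOn_compact isCompact_Icc).mono_set hHsub
  have hdisj : AEDisjoint (volume.prod volume) H (Prod.swap ⁻¹' H) :=
    measure_mono_null (fun p hp => le_antisymm hp.1.2.1 hp.2.2.1) volume_diagonal_eq_zero
  rw [rightTriangle_eq_union, Measure.volume_eq_prod,
    setIntegral_union_preimage_swap hH hdisj hint hsymm, ← Measure.volume_eq_prod]
  congr 1
  exact setIntegral_between_graphs (by norm_num) (l := fun x => x) (u := fun x => 1 - x)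
    measurable_id' (measurable_const.sub measurable_id') (fun x hx => by linarith [hx.2]) hint

end

theorem volume_real_rightTriangle : volume.real rightTriangle = 1 / 2 := by
  have h := integral_rightTriangle (f := fun _ => (1 : ℝ)) continuous_const fun _ => rfl
  norm_num at h
  have hint : IntervalIntegrable (fun x : ℝ => 1 - x) volume 0 (1 / 2) :=
    (continuous_const.sub continuous_id).intervalIntegrable _ _
  rw [h, intervalIntegral.integral_sub hint (by simp),
    intervalIntegral.integral_sub (by simp) (by simp)]
  norm_num

theorem integral_rightTriangle_dist_center :
    ∫ p in rightTriangle, √((1 / 2 - p.1) ^ 2 + (1 / 2 - p.2) ^ 2) = (√2 + arsinh 1) / 12 := by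
  have hinner : ∀ x ∈ uIcc (0 : ℝ) (1 / 2),
      ∫ y in x..1 - x, √((1 / 2 - x) ^ 2 + (1 / 2 - y) ^ 2)
        = (1 / 2 - x) ^ 2 * (√2 + arsinh 1) := by
    intro x hx
    rw [uIcc_of_le (by norm_num)] at hx
    rw [intervalIntegral.integral_comp_sub_left (fun t => √((1 / 2 - x) ^ 2 + t ^ 2)),
      show 1 / 2 - (1 - x) = -(1 / 2 - x) by ring,
      integral_sqrt_sq_add_sq _ (by linarith [hx.2])]
  rw [integral_rightTriangle (by fun_prop) fun p => by
      simp only [Prod.fst_swap, Prod.snd_swap, add_comm],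
    intervalIntegral.integral_congr hinner, intervalIntegral.integral_mul_const,
    intervalIntegral.integral_comp_sub_left (fun x => x ^ 2)]
  norm_num
  ring

theorem convex_rightTriangle : Convex ℝ rightTriangle := by
  rintro p ⟨hp₁, hp₂, hp⟩ q ⟨hq₁, hq₂, hq⟩ a b ha hb hab
  refine ⟨?_, ?_, ?_⟩ <;>
    simp only [Prod.fst_add, Prod.snd_add, Prod.smul_fst, Prod.smul_snd, smul_eq_mul] <;>
    nlinarith

theorem convexHull_zero_pair {E : Type*} [AddCommGroup E] [Module ℝ E] (v w : E) :
    convexHull ℝ {0, v, w} = (fun p : ℝ × ℝ => p.1 • v + p.2 • w) '' rightTriangle := by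
  apply Subset.antisymm
  · refine convexHull_min ?_ (convex_rightTriangle.linear_image
      ((LinearMap.fst ℝ ℝ ℝ).smulRight v + (LinearMap.snd ℝ ℝ ℝ).smulRight w))
    rintro _ (rfl | rfl | rfl)
    · exact ⟨(0, 0), by norm_num [rightTriangle], by simp⟩
    · exact ⟨(1, 0), by norm_num [rightTriangle], by simp⟩
    · exact ⟨(0, 1), by norm_num [rightTriangle], by simp⟩
  · rintro _ ⟨⟨a, b⟩, ⟨ha, hb, hab⟩, rfl⟩
    have := (convex_convexHull ℝ ({0, v, w} : Set E)).sum_mem (t := Finset.univ)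
      (w := ![1 - a - b, a, b]) (z := ![0, v, w])
      (fun i _ => by fin_cases i <;> simp <;> linarith)
      (by simp [Fin.sum_univ_three]; ring)
      (fun i _ => by fin_cases i <;> simp <;> exact subset_convexHull ℝ _ (by simp))
    simpa [Fin.sum_univ_three] using this

theorem convexHull_eq_preimage_rightTriangle :
    convexHull ℝ {(!₂[0, 0] : EuclideanSpace ℝ (Fin 2)), !₂[0, 1], !₂[1, 0]}
      = (fun y : EuclideanSpace ℝ (Fin 2) => (y 0, y 1)) ⁻¹' rightTriangle := by
  rw [show (!₂[0, 0] : EuclideanSpace ℝ (Fin 2)) = 0 by ext i; fin_cases i <;> rfl,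
    convexHull_zero_pair]
  ext y
  constructor
  · rintro ⟨p, ⟨h₁, h₂, h₁₂⟩, rfl⟩
    refine ⟨?_, ?_, ?_⟩ <;> simp <;> linarith
  · rintro ⟨h₀, h₁, h₀₁⟩
    exact ⟨(y 1, y 0), ⟨h₁, h₀, by linarith⟩, by ext i; fin_cases i <;> simp⟩

theorem expectedDist_coords_preimage (S : Set (ℝ × ℝ)) (x : EuclideanSpace ℝ (Fin 2)) :
    expectedDist ((fun y : EuclideanSpace ℝ (Fin 2) => (y 0, y 1)) ⁻¹' S) x
      = (volume.real S)⁻¹ * ∫ p in S, √((x 0 - p.1) ^ 2 + (x 1 - p.2) ^ 2) := by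
  let e : EuclideanSpace ℝ (Fin 2) ≃ᵐ ℝ × ℝ :=
    (MeasurableEquiv.toLp 2 (Fin 2 → ℝ)).symm.trans MeasurableEquiv.finTwoArrow
  have he : MeasurePreserving e := (volume_preserving_finTwoArrow ℝ).comp
    (EuclideanSpace.volume_preserving_symm_measurableEquiv_toLp (Fin 2))
  have hnorm (y : EuclideanSpace ℝ (Fin 2)) :
      ‖x - y‖ = √((x 0 - (e y).1) ^ 2 + (x 1 - (e y).2) ^ 2) := by
    simp [EuclideanSpace.norm_eq, Fin.sum_univ_two, e]
  change expectedDist (e ⁻¹' S) x = _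
  rw [expectedDist, ← he.setIntegral_preimage_emb e.measurableEmbedding,
    he.measure_preimage_equiv S]
  simp_rw [hnorm]
  rfl

/-- For the triangle with vertices `(0,0)`, `(0,1)`, `(1,0)` and `c₂ = (1/2, 1/2)`, the
expected distance from `c₂` to a uniform random point equals
`(1/(6√2)) (2 + √2 arsinh 1)`. -/
theorem expectedDist_midpoint_rightTriangle :
    expectedDist (convexHull ℝ {(!₂[0, 0] : EuclideanSpace ℝ (Fin 2)), !₂[0, 1], !₂[1, 0]})
        (!₂[1/2, 1/2] : EuclideanSpace ℝ (Fin 2)) =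
      1 / (6 * Real.sqrt 2) * (2 + Real.sqrt 2 * Real.arsinh 1) := by
  rw [convexHull_eq_preimage_rightTriangle, expectedDist_coords_preimage, volume_real_rightTriangle]
  simp only [Matrix.cons_val_zero, Matrix.cons_val_one]
  rw [integral_rightTriangle_dist_center]
  have hsqrt2 : √2 * √2 = 2 := mul_self_sqrt zero_le_two
  field_simp
  linear_combination 12 * hsqrt2
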